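/- Under i.i.d. circularly symmetric complex Gaussian channels h_i, g_i ~ CN(0,1) (i = 1,…,N) with c_i = h_i · conj(g_i), the expected sign-alignment SNR satisfies E[γ(φ^SA)] ≥ E[(Σᵢ |Re(cᵢ)|)²] ≥ (Σᵢ E[|Re(cᵢ)|])² = N²/4. -/

import Mathlib

/-!
Taking `φ = sign (Re c)` gives `Re (Σ cᵢ φᵢ) = Σ |Re cᵢ|`, so pointwise
`γ(φ^SA) ≥ γ(sign (Re c)) ≥ (Σ |Re cᵢ|)²`; the second inequality of the statement is
`Var ≥ 0`. For the value, condition on `h`: for fixed `h`, `Re (h g) = Re h · Re g - Im h · Im g`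
is a centred Gaussian of variance `|h|² / 2`, hence `E |Re (h g)| = |h| / √π`, and the mean of the
Rayleigh variable `|h|` is `√π / 2`. So `E |Re cᵢ| = 1/2` for every `i`.
-/

open Finset MeasureTheory ProbabilityTheory

/-- The sign of a real number, returning `+1` when the argument is `0`. -/
noncomputable def sgn (t : ℝ) : ℝ := if 0 ≤ t then 1 else -1

/-- The SNR objective `γ(φ) = |c^T φ|²`. -/
noncomputable def gam {N : ℕ} (c : Fin N → ℂ) (φ : Fin N → ℝ) : ℝ :=
  ‖∑ i, c i * (φ i : ℂ)‖ ^ 2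

/-- The sign-alignment configuration: the better of `sign(Re c)` and `sign(Im c)`. -/
noncomputable def phiSA {N : ℕ} (c : Fin N → ℂ) : Fin N → ℝ :=
  if gam c (fun i => sgn (c i).re) ≥ gam c (fun i => sgn (c i).im)
  then (fun i => sgn (c i).re) else (fun i => sgn (c i).im)

open Real

lemma integral_Ioi_mul_exp_neg_mul_sq {b : ℝ} (hb : 0 < b) :
    ∫ x in Set.Ioi (0 : ℝ), x * exp (-b * x ^ 2) = (2 * b)⁻¹ := by
  have h := integral_rpow_mul_exp_neg_mul_rpow two_pos (by norm_num : (-1 : ℝ) < 1) hb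
  norm_num [rpow_neg_one] at h
  convert h using 1
  · simp [neg_mul]
  · ring

theorem integral_abs_gaussianReal (v : NNReal) :
    ∫ x, |x| ∂gaussianReal 0 v = √(2 * v / π) := by
  rcases eq_or_ne v 0 with rfl | hv
  · simp [gaussianReal_zero_var]
  have hpdf : ∀ x, gaussianPDFReal 0 v x = gaussianPDFReal 0 v |x| := fun x => by
    simp [gaussianPDFReal]
  calc ∫ x, |x| ∂gaussianReal 0 v
      = ∫ x, |x| * gaussianPDFReal 0 v |x| := by
        rw [integral_gaussianReal_eq_integral_smul hv]
        simp_rw [smul_eq_mul, ← hpdf, mul_comm]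
    _ = 2 * ∫ x in Set.Ioi (0 : ℝ), x * gaussianPDFReal 0 v x :=
        integral_comp_abs (f := fun x => x * gaussianPDFReal 0 v x)
    _ = 2 * ((√(2 * π * v))⁻¹ * (2 * (2 * v : ℝ)⁻¹)⁻¹) := by
        rw [← integral_Ioi_mul_exp_neg_mul_sq (by positivity),
          ← integral_const_mul (√(2 * π * v))⁻¹]
        congr 1
        refine setIntegral_congr_fun measurableSet_Ioi fun x _ => ?_
        simp only [gaussianPDFReal, sub_zero]
        ring_nf
    _ = √(2 * v / π) := by
        rw [show (2 * v / π : ℝ) = (2 * v) ^ 2 / (2 * π * v) by field_simp,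
          sqrt_div' _ (by positivity), sqrt_sq (by positivity)]
        field_simp

/-- The circularly symmetric complex Gaussian law `CN(0,1)`. -/
noncomputable def complexGaussian : Measure ℂ :=
  ((gaussianReal 0 (1/2)).prod (gaussianReal 0 (1/2))).map Complex.equivRealProdCLM.symm

instance isGaussian_complexGaussian : IsGaussian complexGaussian := isGaussian_map_equiv _

theorem integral_complexGaussian_eq (f : ℂ → ℝ) :
    ∫ z, f z ∂complexGaussian = ∫ z, π⁻¹ * exp (-‖z‖ ^ 2) * f z := by
  rw [complexGaussian,
    show ⇑Complex.equivRealProdCLM.symm = ⇑Complex.measurableEquivRealProd.symm from rfl,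
    integral_map_equiv, gaussianReal_of_var_ne_zero _ (by norm_num),
    prod_withDensity (by fun_prop) (by fun_prop),
    integral_withDensity_eq_integral_toReal_smul (by fun_prop)
      (ae_of_all _ fun _ => ENNReal.mul_lt_top gaussianPDF_lt_top gaussianPDF_lt_top),
    ← Measure.volume_eq_prod, ← Complex.volume_preserving_equiv_real_prod.integral_comp
      Complex.measurableEquivRealProd.measurableEmbedding]
  refine integral_congr_ae (ae_of_all _ fun z => ?_)
  have hpdf : ∀ x, gaussianPDFReal 0 (1/2) x = (√π)⁻¹ * exp (-x ^ 2) := fun x => by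
    rw [gaussianPDFReal]
    congr 3 <;> push_cast <;> ring
  have hπ : (√π)⁻¹ * (√π)⁻¹ = π⁻¹ := by rw [← mul_inv, mul_self_sqrt pi_pos.le]
  have hz : Complex.measurableEquivRealProd z = (z.re, z.im) := rfl
  simp only [ENNReal.toReal_mul, toReal_gaussianPDF, hpdf, smul_eq_mul,
    MeasurableEquiv.symm_apply_apply, Complex.sq_norm, Complex.normSq_apply]
  simp only [hz]
  rw [← hπ, ← sq z.re, ← sq z.im, neg_add, exp_add]
  ring

theorem integral_norm_complexGaussian : ∫ z, ‖z‖ ∂complexGaussian = √π / 2 := by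
  have h := Complex.integral_rpow_mul_exp_neg_rpow (p := 2) (q := 1) (by norm_num) (by norm_num)
  norm_num at h
  rw [integral_complexGaussian_eq]
  simp_rw [mul_assoc, integral_const_mul, mul_comm (exp _), h]
  rw [show (3 / 2 : ℝ) = 1 / 2 + 1 by norm_num, Gamma_add_one (by norm_num), Gamma_one_half_eq]
  field_simp

theorem integral_abs_re_mul_complexGaussian (z : ℂ) :
    ∫ w, |(z * w).re| ∂complexGaussian = ‖z‖ / √π := by
  set γ := gaussianReal 0 (1/2)
  have hre := gaussianReal_const_mul (measurePreserving_fst (μ := γ) (ν := γ)).hasLaw z.re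
  have him := gaussianReal_const_mul (measurePreserving_snd (μ := γ) (ν := γ)).hasLaw (-z.im)
  have hlaw := (indepFun_prod (μ := γ) (ν := γ) (measurable_const_mul z.re)
    (measurable_const_mul (-z.im))).hasLaw_add hre him
  rw [gaussianReal_conv_gaussianReal] at hlaw
  calc ∫ w, |(z * w).re| ∂complexGaussian
      = ∫ p, |z.re * p.1 + -z.im * p.2| ∂(γ.prod γ) := by
        rw [complexGaussian, integral_map (by fun_prop) (by fun_prop)]
        refine integral_congr_ae (ae_of_all _ fun p => ?_)
        simp [Complex.mul_re, sub_eq_add_neg]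
    _ = √(2 * ((z.re ^ 2 + z.im ^ 2) / 2) / π) := by
        rw [← Function.comp_def (fun x => |x|), ← Pi.add_def, hlaw.integral_comp (by fun_prop)]
        simp only [mul_zero, add_zero, integral_abs_gaussianReal]
        push_cast
        ring_nf
    _ = ‖z‖ / √π := by
        rw [Complex.norm_eq_sqrt_sq_add_sq, ← sqrt_div' _ pi_pos.le]
        ring_nf

section RandomVariables

variable {Ω : Type*} [MeasurableSpace Ω] {μ : Measure Ω}

lemma ProbabilityTheory.IndepFun.hasLaw_prodMk {𝓧 𝓨 : Type*} [MeasurableSpace 𝓧]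
    [MeasurableSpace 𝓨] [IsFiniteMeasure μ] {X : Ω → 𝓧} {Y : Ω → 𝓨} {ν : Measure 𝓧}
    {ρ : Measure 𝓨} (hX : HasLaw X ν μ) (hY : HasLaw Y ρ μ) (hXY : IndepFun X Y μ) :
    HasLaw (fun ω => (X ω, Y ω)) (ν.prod ρ) μ where
  aemeasurable := hX.aemeasurable.prodMk hY.aemeasurable
  map_eq := by
    rw [(indepFun_iff_map_prod_eq_prod_map_map hX.aemeasurable hY.aemeasurable).1 hXY, hX.map_eq,
      hY.map_eq]

theorem hasLaw_complexGaussian_of_indepFun [IsFiniteMeasure μ] {X Y : Ω → ℝ}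
    (hX : HasLaw X (gaussianReal 0 (1/2)) μ) (hY : HasLaw Y (gaussianReal 0 (1/2)) μ)
    (hXY : IndepFun X Y μ) :
    HasLaw (fun ω => (X ω : ℂ) + Y ω * Complex.I) complexGaussian μ := by
  have hmap : HasLaw Complex.equivRealProdCLM.symm complexGaussian
      ((gaussianReal 0 (1/2)).prod (gaussianReal 0 (1/2))) := ⟨by fun_prop, rfl⟩
  simpa only [Complex.equivRealProdCLM_symm_apply] using
    hmap.fun_comp (hXY.hasLaw_prodMk hX hY)

lemma ProbabilityTheory.HasLaw.memLp_of_isGaussian {E : Type*} [NormedAddCommGroup E]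
    [NormedSpace ℝ E] [MeasurableSpace E] [BorelSpace E] [CompleteSpace E]
    [SecondCountableTopology E] {ν : Measure E} [IsGaussian ν] {h : Ω → E} (hh : HasLaw h ν μ)
    {p : ENNReal} (hp : p ≠ ⊤) : MemLp h p μ := by
  rw [← Function.id_comp h, ← memLp_map_measure_iff aestronglyMeasurable_id hh.aemeasurable,
    hh.map_eq]
  exact IsGaussian.memLp_id _ p hp

lemma ProbabilityTheory.IndepFun.memLp_two_mul {𝕜 : Type*} [RCLike 𝕜] {h g : Ω → 𝕜}
    (hhg : IndepFun h g μ) (hh : MemLp h 2 μ) (hg : MemLp g 2 μ) :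
    MemLp (fun ω => h ω * g ω) 2 μ := by
  rw [memLp_two_iff_integrable_sq_norm (f := fun ω => h ω * g ω) (hh.1.mul hg.1)]
  simp_rw [norm_mul, mul_pow]
  have hsq : ∀ {f : Ω → 𝕜}, MemLp f 2 μ → Integrable (fun ω => ‖f ω‖ ^ 2) μ :=
    fun hf => hf.norm.integrable_sq
  exact (hhg.comp (measurable_norm.pow_const 2) (measurable_norm.pow_const 2)).integrable_mul
    (hsq hh) (hsq hg)

theorem integral_abs_re_mul_of_indepFun {h g : Ω → ℂ} (hh : HasLaw h complexGaussian μ)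
    (hg : HasLaw g complexGaussian μ) (hhg : IndepFun h g μ) :
    ∫ ω, |(h ω * g ω).re| ∂μ = 1 / 2 := by
  have := hh.isProbabilityMeasure
  have hint : Integrable (fun p : ℂ × ℂ => |(p.1 * p.2).re|)
      (complexGaussian.prod complexGaussian) :=
    (IsGaussian.integrable_id.norm.mul_prod IsGaussian.integrable_id.norm).mono' (by fun_prop)
      (ae_of_all _ fun p => by simpa [norm_mul] using Complex.abs_re_le_norm (p.1 * p.2))
  calc ∫ ω, |(h ω * g ω).re| ∂μ
      = ∫ p, |(p.1 * p.2).re| ∂(complexGaussian.prod complexGaussian) :=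
        (hhg.hasLaw_prodMk hh hg).integral_comp hint.aestronglyMeasurable
    _ = ∫ z, ‖z‖ / √π ∂complexGaussian := by
        simp_rw [integral_prod _ hint, integral_abs_re_mul_complexGaussian]
    _ = 1 / 2 := by
        rw [integral_div, integral_norm_complexGaussian]
        field_simp [(sqrt_pos.2 pi_pos).ne']

lemma sq_integral_le_integral_sq [IsProbabilityMeasure μ] {Y : Ω → ℝ} (hY : MemLp Y 2 μ) :
    (∫ ω, Y ω ∂μ) ^ 2 ≤ ∫ ω, Y ω ^ 2 ∂μ := by
  have h := variance_nonneg Y μ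
  rw [variance_eq_sub hY] at h
  simp only [Pi.pow_apply] at h
  linarith

end RandomVariables

section SignAlignment

variable {N : ℕ}

lemma mul_sgn (t : ℝ) : t * sgn t = |t| := by
  unfold sgn
  split_ifs with h
  · rw [mul_one, abs_of_nonneg h]
  · rw [mul_neg_one, abs_of_neg (not_le.mp h)]

lemma abs_sgn (t : ℝ) : |sgn t| = 1 := by
  unfold sgn; split_ifs <;> simp

@[fun_prop]
lemma measurable_sgn : Measurable sgn :=
  Measurable.ite measurableSet_Ici measurable_const measurable_const

lemma gam_phiSA (c : Fin N → ℂ) :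
    gam c (phiSA c) = max (gam c fun i => sgn (c i).re) (gam c fun i => sgn (c i).im) := by
  unfold phiSA
  split_ifs with h
  · exact (max_eq_left h).symm
  · exact (max_eq_right (not_le.mp h).le).symm

lemma measurable_gam_phiSA : Measurable fun c : Fin N → ℂ => gam c (phiSA c) := by
  simp_rw [gam_phiSA, gam]
  fun_prop

lemma sq_sum_abs_re_le_gam_phiSA (c : Fin N → ℂ) : (∑ i, |(c i).re|) ^ 2 ≤ gam c (phiSA c) := by
  have hre : (∑ i, c i * (sgn (c i).re : ℂ)).re = ∑ i, |(c i).re| := by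
    simp [Complex.re_sum, mul_sgn]
  calc (∑ i, |(c i).re|) ^ 2 ≤ gam c fun i => sgn (c i).re := by
        rw [gam, ← hre]
        exact sq_le_sq.2 ((Complex.abs_re_le_norm _).trans (le_abs_self _))
    _ ≤ gam c (phiSA c) := gam_phiSA c ▸ le_max_left _ _

lemma gam_le_sq_sum_norm (c : Fin N → ℂ) {φ : Fin N → ℝ} (hφ : ∀ i, |φ i| ≤ 1) :
    gam c φ ≤ (∑ i, ‖c i‖) ^ 2 := by
  refine pow_le_pow_left₀ (norm_nonneg _) ((norm_sum_le _ _).trans (sum_le_sum fun i _ => ?_)) 2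
  rw [norm_mul, Complex.norm_real, Real.norm_eq_abs]
  exact mul_le_of_le_one_right (norm_nonneg _) (hφ i)

lemma gam_phiSA_le_sq_sum_norm (c : Fin N → ℂ) : gam c (phiSA c) ≤ (∑ i, ‖c i‖) ^ 2 := by
  rw [gam_phiSA]
  exact max_le (gam_le_sq_sum_norm c fun i => (abs_sgn _).le)
    (gam_le_sq_sum_norm c fun i => (abs_sgn _).le)

variable {Ω : Type*} [MeasurableSpace Ω] {μ : Measure Ω} {c : Ω → Fin N → ℂ}

theorem integral_sq_sum_abs_re_le_integral_gam_phiSA (hc : ∀ i, MemLp (fun ω => c ω i) 2 μ) :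
    ∫ ω, (∑ i, |(c ω i).re|) ^ 2 ∂μ ≤ ∫ ω, gam (c ω) (phiSA (c ω)) ∂μ := by
  have hbound : Integrable (fun ω => (∑ i, ‖c ω i‖) ^ 2) μ :=
    (memLp_finsetSum _ fun i _ => (hc i).norm).integrable_sq
  have hmeas : AEStronglyMeasurable (fun ω => gam (c ω) (phiSA (c ω))) μ :=
    (measurable_gam_phiSA.comp_aemeasurable
      (aemeasurable_pi_lambda _ fun i => (hc i).aemeasurable)).aestronglyMeasurable
  refine integral_mono_of_nonneg (ae_of_all _ fun ω => by positivity)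
    (hbound.mono' hmeas (ae_of_all _ fun ω => ?_))
    (ae_of_all _ fun ω => sq_sum_abs_re_le_gam_phiSA (c ω))
  rw [Real.norm_eq_abs, abs_of_nonneg (by rw [gam]; positivity)]
  exact gam_phiSA_le_sq_sum_norm (c ω)

theorem sq_sum_integral_abs_re_le_integral_sq_sum [IsProbabilityMeasure μ]
    (hc : ∀ i, MemLp (fun ω => c ω i) 2 μ) :
    (∑ i, ∫ ω, |(c ω i).re| ∂μ) ^ 2 ≤ ∫ ω, (∑ i, |(c ω i).re|) ^ 2 ∂μ := by
  have hre : ∀ i, MemLp (fun ω => |(c ω i).re|) 2 μ := fun i => (hc i).re.abs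
  rw [← integral_finsetSum _ fun i _ => (hre i).integrable one_le_two]
  exact sq_integral_le_integral_sq (memLp_finsetSum _ fun i _ => hre i)

end SignAlignment

/-- The channels are encoded as `h i = X (i,0) + I·X (i,1)` and `conj (g i) = X (i,2) + I·X (i,3)`. -/
theorem stmt8 {Ω : Type*} [MeasurableSpace Ω] (μ : Measure Ω) [IsProbabilityMeasure μ]
    (N : ℕ) (X : Fin N × Fin 4 → Ω → ℝ)
    (hmeas : ∀ p, Measurable (X p))
    (hindep : iIndepFun X μ)
    (hdist : ∀ p, μ.map (X p) = gaussianReal 0 (1/2))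
    (c : Ω → Fin N → ℂ)
    (hc : ∀ ω i, c ω i =
      ((X (i, 0) ω : ℂ) + (X (i, 1) ω : ℂ) * Complex.I) *
      ((X (i, 2) ω : ℂ) + (X (i, 3) ω : ℂ) * Complex.I)) :
    (∫ ω, gam (c ω) (phiSA (c ω)) ∂μ) ≥ (∫ ω, (∑ i, |(c ω i).re|) ^ 2 ∂μ) ∧
    (∫ ω, (∑ i, |(c ω i).re|) ^ 2 ∂μ) ≥ (∑ i, ∫ ω, |(c ω i).re| ∂μ) ^ 2 ∧
    (∑ i, ∫ ω, |(c ω i).re| ∂μ) ^ 2 = (N : ℝ) ^ 2 / 4 := by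
  have hne : ∀ (i : Fin N) {a b : Fin 4}, a ≠ b → (i, a) ≠ (i, b) :=
    fun i a b hab h => hab (congrArg Prod.snd h)
  have hlaw : ∀ (i : Fin N) {a b : Fin 4}, a ≠ b →
      HasLaw (fun ω => (X (i, a) ω : ℂ) + X (i, b) ω * Complex.I) complexGaussian μ :=
    fun i a b hab => hasLaw_complexGaussian_of_indepFun ⟨(hmeas _).aemeasurable, hdist _⟩
      ⟨(hmeas _).aemeasurable, hdist _⟩ (hindep.indepFun (hne i hab))
  have hind : ∀ i, IndepFun (fun ω => (X (i, 0) ω : ℂ) + X (i, 1) ω * Complex.I)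
      (fun ω => (X (i, 2) ω : ℂ) + X (i, 3) ω * Complex.I) μ := fun i =>
    (hindep.indepFun_prodMk_prodMk hmeas _ _ _ _ (hne i (by decide)) (hne i (by decide))
      (hne i (by decide)) (hne i (by decide))).comp
      (φ := fun p : ℝ × ℝ => (p.1 : ℂ) + p.2 * Complex.I)
      (ψ := fun p : ℝ × ℝ => (p.1 : ℂ) + p.2 * Complex.I) (by fun_prop) (by fun_prop)
  have hL2 : ∀ i, MemLp (fun ω => c ω i) 2 μ := fun i => by
    simp_rw [hc]
    exact (hind i).memLp_two_mul ((hlaw i (by decide)).memLp_of_isGaussian (by simp))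
      ((hlaw i (by decide)).memLp_of_isGaussian (by simp))
  have hmean : ∀ i, ∫ ω, |(c ω i).re| ∂μ = 1 / 2 := fun i => by
    simp_rw [hc]
    exact integral_abs_re_mul_of_indepFun (hlaw i (by decide)) (hlaw i (by decide)) (hind i)
  refine ⟨integral_sq_sum_abs_re_le_integral_gam_phiSA hL2,
    sq_sum_integral_abs_re_le_integral_sq_sum hL2, ?_⟩
  simp only [hmean, sum_const, card_univ, Fintype.card_fin, nsmul_eq_mul]
  ring
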